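/- arXiv:math/0608703 — 2 statements merged into one kernel-verified Lean document; each statement's English description precedes it below -/
import Mathlib

section
/- For any odd prime p, the trigonometric identity ∑_{l=1}^{p-1} (−1)^l cos(π l / p) · csc²(π l / p) = −(1/2) · ∑_{l=1}^{p-1} csc²(π l / p) holds. -/
open Real Finset

theorem alternating_cos_csc_sq_sum (p : ℕ) (hp : p.Prime) (hodd : Odd p) :
    ∑ l ∈ Finset.Icc 1 (p - 1),
        (-1 : ℝ) ^ l * Real.cos (π * l / p) * (1 / Real.sin (π * l / p)) ^ 2 =
      -(1 / 2) * ∑ l ∈ Finset.Icc 1 (p - 1), (1 / Real.sin (π * l / p)) ^ 2 := by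
  have hp3 : 3 ≤ p := by
    have := hp.two_le; have := Nat.odd_iff.mp hodd; omega
  have hpR : (0:ℝ) < (p:ℝ) := by positivity
  have hpne : (p:ℝ) ≠ 0 := ne_of_gt hpR
  set u : ℕ → ℝ := fun m => (1 / Real.sin (π * m / (2*p)))^2 with hu
  -- sin positivity
  have hsin : ∀ m : ℕ, 1 ≤ m → m < 2*p → 0 < Real.sin (π * m / (2*p)) := by
    intro m h1 h2
    apply Real.sin_pos_of_pos_of_lt_pi
    · have : (0:ℝ) < (m:ℝ) := by exact_mod_cast h1
      positivity
    · rw [div_lt_iff₀ (by positivity)]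
      have : (m:ℝ) < 2*p := by exact_mod_cast h2
      nlinarith [Real.pi_pos]
  -- reflection: sin of (p-m) angle is cos
  have hcos : ∀ m : ℕ, m ≤ p → Real.sin (π * ((p - m : ℕ):ℝ) / (2*p)) = Real.cos (π * m / (2*p)) := by
    intro m hm
    rw [Nat.cast_sub hm]
    have : π * ((p:ℝ) - m) / (2*p) = π/2 - π * m / (2*p) := by field_simp
    rw [this, Real.sin_pi_div_two_sub]
  have hcpos : ∀ m : ℕ, 1 ≤ m → m ≤ p - 1 → 0 < Real.cos (π * m / (2*p)) := by
    intro m h1 h2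
    rw [← hcos m (by omega)]
    exact hsin _ (by omega) (by omega)
  -- reflection reindexing lemma
  have refl : ∀ f : ℕ → ℝ, ∑ l ∈ Finset.Icc 1 (p-1), f (p - l) = ∑ l ∈ Finset.Icc 1 (p-1), f l := by
    intro f
    apply Finset.sum_nbij' (i := fun l => p - l) (j := fun l => p - l)
    · intro a ha; simp only [Finset.mem_Icc] at *; omega
    · intro a ha; simp only [Finset.mem_Icc] at *; omega
    · intro a ha; simp only [Finset.mem_Icc] at ha; omega
    · intro a ha; simp only [Finset.mem_Icc] at ha; omega
    · intro a ha; rfl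
  -- key term identities
  have key1 : ∀ l ∈ Finset.Icc 1 (p-1),
      Real.cos (π * l / p) * (1 / Real.sin (π * l / p)) ^ 2 = (u l - u (p - l)) / 4 := by
    intro l hl
    simp only [Finset.mem_Icc] at hl
    have hs := hsin l (by omega) (by omega)
    have hc := hcpos l hl.1 hl.2
    have h2 : π * l / p = 2 * (π * l / (2*p)) := by field_simp
    rw [h2, Real.sin_two_mul, Real.cos_two_mul]
    have hpyth := Real.sin_sq_add_cos_sq (π * l / (2*p))
    simp only [hu]
    rw [hcos l (by omega)]
    set s := Real.sin (π * l / (2*p))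
    set c := Real.cos (π * l / (2*p))
    rw [show 2*c^2 - 1 = c^2 - s^2 by linarith]
    field_simp
    ring_nf
  have key2 : ∀ l ∈ Finset.Icc 1 (p-1),
      (1 / Real.sin (π * l / p)) ^ 2 = (u l + u (p - l)) / 4 := by
    intro l hl
    simp only [Finset.mem_Icc] at hl
    have hs := hsin l (by omega) (by omega)
    have hc := hcpos l hl.1 hl.2
    have h2 : π * l / p = 2 * (π * l / (2*p)) := by field_simp
    rw [h2, Real.sin_two_mul]
    have hpyth := Real.sin_sq_add_cos_sq (π * l / (2*p))
    simp only [hu]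
    rw [hcos l (by omega)]
    set s := Real.sin (π * l / (2*p))
    set c := Real.cos (π * l / (2*p))
    field_simp
    nlinarith [hs, hc]
  -- sign lemma
  have hsign : ∀ l ∈ Finset.Icc 1 (p-1), ((-1:ℝ))^(p-l) = -(-1:ℝ)^l := by
    intro l hl
    simp only [Finset.mem_Icc] at hl
    have h : (-1:ℝ)^(p-l) * (-1)^l = -1 := by
      rw [← pow_add, show p - l + l = p by omega]
      exact Odd.neg_one_pow hodd
    have h2 : ((-1:ℝ)^l)^2 = 1 := by
      rw [← pow_mul, mul_comm, pow_mul]; norm_num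
    linear_combination ((-1:ℝ)^l) * h - ((-1:ℝ)^(p-l)) * h2
  set S : ℝ := ∑ l ∈ Finset.Icc 1 (p-1), u l with hS
  set A : ℝ := ∑ l ∈ Finset.Icc 1 (p-1), (-1:ℝ)^l * u l with hA
  have hSrefl : ∑ l ∈ Finset.Icc 1 (p-1), u (p - l) = S := refl u
  have hArefl : ∑ l ∈ Finset.Icc 1 (p-1), (-1:ℝ)^l * u (p - l) = -A := by
    have hg := refl (fun m => -((-1:ℝ)^m * u m))
    calc ∑ l ∈ Finset.Icc 1 (p-1), (-1:ℝ)^l * u (p - l)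
        = ∑ l ∈ Finset.Icc 1 (p-1), -((-1:ℝ)^(p-l) * u (p - l)) := by
          apply Finset.sum_congr rfl
          intro l hl
          rw [hsign l hl]
          ring
      _ = ∑ l ∈ Finset.Icc 1 (p-1), -((-1:ℝ)^l * u l) := hg
      _ = -A := by rw [hA, ← Finset.sum_neg_distrib]
  -- rewrite both sides
  have hL : ∑ l ∈ Finset.Icc 1 (p - 1),
        (-1 : ℝ) ^ l * Real.cos (π * l / p) * (1 / Real.sin (π * l / p)) ^ 2
      = (1/4) * A - (1/4) * ∑ l ∈ Finset.Icc 1 (p-1), (-1:ℝ)^l * u (p - l) := by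
    rw [hA, Finset.mul_sum, Finset.mul_sum, ← Finset.sum_sub_distrib]
    apply Finset.sum_congr rfl
    intro l hl
    rw [mul_assoc, key1 l hl]
    ring
  have hR : ∑ l ∈ Finset.Icc 1 (p - 1), (1 / Real.sin (π * l / p)) ^ 2
      = (1/4) * S + (1/4) * ∑ l ∈ Finset.Icc 1 (p-1), u (p - l) := by
    rw [hS, Finset.mul_sum, Finset.mul_sum, ← Finset.sum_add_distrib]
    apply Finset.sum_congr rfl
    intro l hl
    rw [key2 l hl]
    ring
  rw [hL, hR, hArefl, hSrefl]
  -- now suffices 2A = -S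
  obtain ⟨q, hq⟩ := hodd
  have hq1 : p - 1 = 2*q := by omega
  have hq2 : 1 ≤ q := by omega
  set E : ℝ := ∑ k ∈ Finset.Icc 1 q, u (2*k) with hE
  have hdup : ∀ k ∈ Finset.Icc 1 q, u (2*k) = (u k + u (p - k))/4 := by
    intro k hk
    simp only [Finset.mem_Icc] at hk
    have hcast : π * ((2*k : ℕ):ℝ) / (2*p) = π * (k:ℝ) / p := by
      push_cast; field_simp
    have : u (2*k) = (1 / Real.sin (π * k / p)) ^ 2 := by
      simp only [hu]
      rw [hcast]
    rw [this]
    exact key2 k (Finset.mem_Icc.mpr ⟨hk.1, by omega⟩)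
  have hAS : A + S = 2*E := by
    rw [hA, hS, ← Finset.sum_add_distrib]
    have himg : (Finset.Icc 1 q).image (fun k => 2*k) ⊆ Finset.Icc 1 (p-1) := by
      intro x hx
      simp only [Finset.mem_image, Finset.mem_Icc] at hx ⊢
      obtain ⟨k, hk, rfl⟩ := hx
      omega
    rw [← Finset.sum_subset himg]
    · rw [Finset.sum_image (by intro a _ b _ h; simp only at h; omega)]
      rw [hE, Finset.mul_sum]
      apply Finset.sum_congr rfl
      intro k hk
      have : ((-1:ℝ))^(2*k) = 1 := by
        rw [pow_mul]; norm_num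
      rw [this]; ring
    · intro l hl hli
      simp only [Finset.mem_Icc] at hl
      rcases Nat.even_or_odd l with he | ho
      · exfalso
        obtain ⟨k, hk⟩ := he
        exact hli (Finset.mem_image.mpr ⟨k, Finset.mem_Icc.mpr (by omega), by omega⟩)
      · rw [Odd.neg_one_pow ho]
        ring
  have hsplit : ∑ k ∈ Finset.Icc 1 q, (u k + u (p - k)) = S := by
    rw [Finset.sum_add_distrib]
    have h2 : ∑ k ∈ Finset.Icc 1 q, u (p - k) = ∑ m ∈ Finset.Icc (q+1) (2*q), u m := by
      apply Finset.sum_nbij' (i := fun k => p - k) (j := fun m => p - m)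
      · intro a ha; simp only [Finset.mem_Icc] at *; omega
      · intro a ha; simp only [Finset.mem_Icc] at *; omega
      · intro a ha; simp only [Finset.mem_Icc] at ha; omega
      · intro a ha; simp only [Finset.mem_Icc] at ha; omega
      · intro a ha; rfl
    rw [h2, hS, hq1]
    have e1 : Finset.Icc 1 q = Finset.Ioc 0 q := by
      ext x; simp only [Finset.mem_Icc, Finset.mem_Ioc]; omega
    have e2 : Finset.Icc (q+1) (2*q) = Finset.Ioc q (2*q) := by
      ext x; simp only [Finset.mem_Icc, Finset.mem_Ioc]; omega
    have e3 : Finset.Icc 1 (2*q) = Finset.Ioc 0 (2*q) := by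
      ext x; simp only [Finset.mem_Icc, Finset.mem_Ioc]; omega
    rw [e1, e2, e3]
    exact Finset.sum_Ioc_consecutive u (by omega) (by omega)
  have hES : 4*E = S := by
    rw [hE]
    rw [Finset.sum_congr rfl hdup, ← hsplit]
    rw [Finset.mul_sum]
    apply Finset.sum_congr rfl
    intro k hk
    ring
  linarith
end

section
/- Let p be an odd prime and ν a primitive p-th root of unity. If a_0, …, a_{p-1} are integers and integers i, m satisfy 2^i (a_0 + a_1 ν^2 + a_2 ν^4 + … + a_{p-1} ν^{2(p-1)}) = 2^m (a_0 + a_1 ν + … + a_{p-1} ν^{p-1}) with i < m, then a_0 + a_1 ν + … + a_{p-1} ν^{p-1} = 0 and consequently a_0 = a_1 = … = a_{p-1}. -/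
open Polynomial Finset

private lemma pow_mod_eq' {M : Type*} [Monoid M] {x : M} {p : ℕ} (h : x ^ p = 1) (a : ℕ) :
    x ^ a = x ^ (a % p) := by
  conv_lhs => rw [← Nat.mod_add_div a p]
  rw [pow_add, pow_mul, h, one_pow, mul_one]

theorem sum_vanishes_of_galois_power_relation (p : ℕ) (hp : p.Prime) (hodd : Odd p)
    (ν : ℂ) (hν : ν ^ p = 1) (hν1 : ν ≠ 1)
    (a : ℕ → ℤ) (i m : ℤ) (him : i < m)
    (h : (2 : ℂ) ^ i * ∑ j ∈ Finset.range p, (a j : ℂ) * ν ^ (2 * j) =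
         (2 : ℂ) ^ m * ∑ j ∈ Finset.range p, (a j : ℂ) * ν ^ j) :
    (∑ j ∈ Finset.range p, (a j : ℂ) * ν ^ j = 0) ∧
      ∀ j ∈ Finset.range p, ∀ j' ∈ Finset.range p, a j = a j' := by
  have hp1 : 1 < p := hp.one_lt
  have hprim : IsPrimitiveRoot ν p := by
    refine ⟨hν, fun l hl => ?_⟩
    have h1 : orderOf ν ∣ p := orderOf_dvd_of_pow_eq_one hν
    have h2 : orderOf ν ∣ l := orderOf_dvd_of_pow_eq_one hl
    rcases hp.eq_one_or_self_of_dvd _ h1 with h' | h'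
    · exact absurd (orderOf_eq_one_iff.mp h') hν1
    · rwa [← h']
  have hcop : Nat.Coprime 2 p := by
    rw [Nat.prime_two.coprime_iff_not_dvd]
    rw [Nat.odd_iff] at hodd
    omega
  have hprim2 : IsPrimitiveRoot (ν ^ 2) p := hprim.pow_of_coprime 2 hcop
  have hmin : minpoly ℚ ν = Polynomial.cyclotomic p ℚ :=
    (Polynomial.cyclotomic_eq_minpoly_rat hprim hp.pos).symm
  have hirr : Irreducible (minpoly ℚ ν) := by
    rw [hmin]; exact Polynomial.cyclotomic.irreducible_rat hp.pos
  haveI : Fact (Irreducible (minpoly ℚ ν)) := ⟨hirr⟩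
  set P : Polynomial ℚ := minpoly ℚ ν with hP
  have haev : Polynomial.aeval ν P = 0 := minpoly.aeval ℚ ν
  let ι : AdjoinRoot P →ₐ[ℚ] ℂ := AdjoinRoot.liftAlgHom P (Algebra.ofId ℚ ℂ) ν haev
  set x : AdjoinRoot P := AdjoinRoot.root P with hx
  have hιx : ι x = ν := by
    exact AdjoinRoot.liftAlgHom_root _ _ _ haev
  have hιinj : Function.Injective ι := ι.toRingHom.injective
  have haev2 : Polynomial.aeval (x ^ 2) P = 0 := by
    apply hιinj
    rw [map_zero, ← Polynomial.aeval_algHom_apply, map_pow, hιx]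
    rw [hmin, Polynomial.aeval_def, ← Polynomial.eval_map, Polynomial.map_cyclotomic]
    exact hprim2.isRoot_cyclotomic hp.pos
  let φ : AdjoinRoot P →ₐ[ℚ] AdjoinRoot P := AdjoinRoot.liftAlgHom P (Algebra.ofId ℚ (AdjoinRoot P)) (x ^ 2) haev2
  have hφx : φ x = x ^ 2 := by
    exact AdjoinRoot.liftAlgHom_root _ _ _ haev2
  have hxp : x ^ p = 1 := by
    apply hιinj; rw [map_pow, hιx, hν, map_one]
  set S : ℕ → AdjoinRoot P := fun t => ∑ j ∈ Finset.range p, (a j : AdjoinRoot P) * x ^ (t * j)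
    with hS
  have hφS : ∀ t, φ (S t) = S (2 * t) := by
    intro t
    simp only [hS, map_sum, map_mul, map_intCast, map_pow, hφx]
    refine Finset.sum_congr rfl fun j _ => ?_
    rw [← pow_mul, mul_assoc]
  have hιS : ∀ t, ι (S t) = ∑ j ∈ Finset.range p, (a j : ℂ) * ν ^ (t * j) := by
    intro t
    simp only [hS, map_sum, map_mul, map_intCast, map_pow, hιx]
  have h2K : (2 : AdjoinRoot P) ≠ 0 := by
    intro h0
    have : (2 : ℂ) = 0 := by
      have := congrArg ι h0
      simp at this
    norm_num at this
  have hι2 : ∀ n : ℤ, ι ((2 : AdjoinRoot P) ^ n) = (2 : ℂ) ^ n := by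
    intro n
    rw [map_zpow₀, map_ofNat]
  have e0 : (2 : AdjoinRoot P) ^ i * S 2 = (2 : AdjoinRoot P) ^ m * S 1 := by
    apply hιinj
    rw [map_mul, map_mul, hι2, hι2, hιS, hιS]
    simpa using h
  have e : ∀ k : ℕ, (2 : AdjoinRoot P) ^ i * S (2 ^ (k + 1)) =
      (2 : AdjoinRoot P) ^ m * S (2 ^ k) := by
    intro k
    induction k with
    | zero => simpa using e0
    | succ n ih =>
      have := congrArg φ ih
      rw [map_mul, map_mul, map_zpow₀, map_zpow₀, hφS, hφS, map_ofNat] at this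
      have h21 : 2 * 2 ^ (n + 1) = 2 ^ (n + 1 + 1) := (pow_succ' 2 (n + 1)).symm
      have h22 : 2 * 2 ^ n = 2 ^ (n + 1) := (pow_succ' 2 n).symm
      rwa [h21, h22] at this
  have chainC : ∀ k : ℕ, (2 : AdjoinRoot P) ^ ((k : ℤ) * i) * S (2 ^ k) =
      (2 : AdjoinRoot P) ^ ((k : ℤ) * m) * S 1 := by
    intro k
    induction k with
    | zero => simp
    | succ n ih =>
      have hek := e n
      have : (2 : AdjoinRoot P) ^ ((n : ℤ) * i) * ((2 : AdjoinRoot P) ^ i * S (2 ^ (n + 1))) =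
          (2 : AdjoinRoot P) ^ ((n : ℤ) * i) * ((2 : AdjoinRoot P) ^ m * S (2 ^ n)) := by
        rw [hek]
      calc (2 : AdjoinRoot P) ^ (((n : ℕ) + 1 : ℤ) * i) * S (2 ^ (n + 1))
          = (2 : AdjoinRoot P) ^ ((n : ℤ) * i) * ((2 : AdjoinRoot P) ^ i * S (2 ^ (n + 1))) := by
            rw [← mul_assoc, ← zpow_add₀ h2K]; ring_nf
        _ = (2 : AdjoinRoot P) ^ ((n : ℤ) * i) * ((2 : AdjoinRoot P) ^ m * S (2 ^ n)) := this
        _ = (2 : AdjoinRoot P) ^ m * ((2 : AdjoinRoot P) ^ ((n : ℤ) * i) * S (2 ^ n)) := by ring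
        _ = (2 : AdjoinRoot P) ^ m * ((2 : AdjoinRoot P) ^ ((n : ℤ) * m) * S 1) := by rw [ih]
        _ = (2 : AdjoinRoot P) ^ (((n : ℕ) + 1 : ℤ) * m) * S 1 := by
            rw [← mul_assoc, ← zpow_add₀ h2K]; ring_nf
  have hfermat : 2 ^ (p - 1) ≡ 1 [MOD p] := by
    have := Nat.ModEq.pow_totient hcop
    rwa [Nat.totient_prime hp] at this
  have hSeq : S (2 ^ (p - 1)) = S 1 := by
    refine Finset.sum_congr rfl fun j _ => ?_
    congr 1
    rw [pow_mod_eq' hxp (2 ^ (p - 1) * j), pow_mod_eq' hxp (1 * j)]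
    congr 1
    exact hfermat.mul_right j
  have hfin : (2 : ℂ) ^ (((p - 1 : ℕ) : ℤ) * i) * (∑ j ∈ Finset.range p, (a j : ℂ) * ν ^ j) =
      (2 : ℂ) ^ (((p - 1 : ℕ) : ℤ) * m) * (∑ j ∈ Finset.range p, (a j : ℂ) * ν ^ j) := by
    have := congrArg ι (chainC (p - 1))
    rw [hSeq, map_mul, map_mul, hι2, hι2, hιS] at this
    simpa using this
  have hSc : (∑ j ∈ Finset.range p, (a j : ℂ) * ν ^ j) = 0 := by
    by_contra hne
    have h2 : (2 : ℂ) ^ (((p - 1 : ℕ) : ℤ) * i) = (2 : ℂ) ^ (((p - 1 : ℕ) : ℤ) * m) :=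
      mul_right_cancel₀ hne hfin
    have hlt : ((p - 1 : ℕ) : ℤ) * i < ((p - 1 : ℕ) : ℤ) * m := by
      have : (0 : ℤ) < ((p - 1 : ℕ) : ℤ) := by
        have : 0 < p - 1 := by omega
        exact_mod_cast this
      exact mul_lt_mul_of_pos_left him this
    set A := ((p - 1 : ℕ) : ℤ) * i
    set B := ((p - 1 : ℕ) : ℤ) * m
    have h2A : (2 : ℂ) ^ A ≠ 0 := zpow_ne_zero _ (by norm_num)
    have hBA : (2 : ℂ) ^ (B - A) = 1 := by
      rw [zpow_sub₀ (by norm_num : (2 : ℂ) ≠ 0), ← h2]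
      field_simp
    set n : ℕ := (B - A).toNat with hn
    have hnpos : 0 < n := by omega
    have hcast : (B - A) = (n : ℤ) := by omega
    rw [hcast, zpow_natCast] at hBA
    have : ((2 ^ n : ℕ) : ℂ) = 1 := by push_cast; exact hBA
    have h2n : (2 : ℕ) ^ n = 1 := by exact_mod_cast this
    have := Nat.one_lt_two_pow_iff.mpr (by omega : n ≠ 0)
    omega
  refine ⟨hSc, ?_⟩
  -- Part 2: all coefficients equal
  have hgeo : ∑ j ∈ Finset.range p, ν ^ j = 0 := by
    rw [geom_sum_eq hν1, hν, sub_self, zero_div]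
  set q : Polynomial ℚ :=
    ∑ j ∈ Finset.range (p - 1), Polynomial.C ((a j : ℚ) - (a (p - 1) : ℚ)) * Polynomial.X ^ j
    with hq
  have haevq : Polynomial.aeval ν q = 0 := by
    rw [hq, map_sum]
    simp only [map_mul, Polynomial.aeval_C, map_pow, Polynomial.aeval_X]
    have hsplit : ∑ j ∈ Finset.range p,
        (algebraMap ℚ ℂ) ((a j : ℚ) - (a (p - 1) : ℚ)) * ν ^ j =
        ∑ j ∈ Finset.range (p - 1),
        (algebraMap ℚ ℂ) ((a j : ℚ) - (a (p - 1) : ℚ)) * ν ^ j := by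
      have hpp : p = (p - 1) + 1 := by omega
      rw [hpp, Finset.sum_range_succ, ← hpp]
      simp
    rw [← hsplit]
    have : ∑ j ∈ Finset.range p, (algebraMap ℚ ℂ) ((a j : ℚ) - (a (p - 1) : ℚ)) * ν ^ j =
        (∑ j ∈ Finset.range p, (a j : ℂ) * ν ^ j) -
        (a (p - 1) : ℂ) * ∑ j ∈ Finset.range p, ν ^ j := by
      rw [Finset.mul_sum, ← Finset.sum_sub_distrib]
      refine Finset.sum_congr rfl fun j _ => ?_
      rw [map_sub, eq_ratCast, eq_ratCast]
      push_cast
      ring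
    rw [this, hSc, hgeo]
    ring
  have hdegmin : P.degree = ((p - 1 : ℕ) : WithBot ℕ) := by
    rw [hmin, Polynomial.degree_cyclotomic, Nat.totient_prime hp]
  have hdegq : q.degree < ((p - 1 : ℕ) : WithBot ℕ) := by
    rw [hq]
    apply lt_of_le_of_lt (Polynomial.degree_sum_le _ _)
    rw [Finset.sup_lt_iff (by exact_mod_cast WithBot.bot_lt_coe (p - 1))]
    intro j hj
    apply lt_of_le_of_lt (Polynomial.degree_C_mul_X_pow_le _ _)
    exact_mod_cast Finset.mem_range.mp hj
  have hq0 : q = 0 := by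
    by_contra hqne
    have := minpoly.degree_le_of_ne_zero ℚ ν hqne haevq
    rw [← hP, hdegmin] at this
    exact absurd this (not_le.mpr hdegq)
  have hcoeff : ∀ j < p - 1, (a j : ℚ) - (a (p - 1) : ℚ) = 0 := by
    intro j hj
    have := congrArg (fun r => Polynomial.coeff r j) hq0
    simp only [hq, Polynomial.finset_sum_coeff, Polynomial.coeff_C_mul,
      Polynomial.coeff_X_pow, Polynomial.coeff_zero, mul_ite, mul_one, mul_zero] at this
    rwa [Finset.sum_ite_eq (Finset.range (p - 1)) j, if_pos (Finset.mem_range.mpr hj)] at this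
  have key : ∀ j < p, a j = a (p - 1) := by
    intro j hj
    rcases Nat.lt_or_ge j (p - 1) with hj' | hj'
    · have := hcoeff j hj'
      have : (a j : ℚ) = (a (p - 1) : ℚ) := by linarith
      exact_mod_cast this
    · have : j = p - 1 := by omega
      rw [this]
  intro j hj j' hj'
  rw [key j (Finset.mem_range.mp hj), key j' (Finset.mem_range.mp hj')]
end
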